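/- arXiv:2506.10817 — 4 statements merged into one kernel-verified Lean document; each statement's English description precedes it below -/
import Mathlib

section
/- For every λ > 0, ε > 0, γ ∈ (0,1], and all reals x, y with |x - y| < ε, the centered Gaussian density satisfies φ_λ(y) ≥ (2πλ)^{γ/2} · φ_λ(x)^{1+γ} · exp(-2ε²/(γλ)). -/
/-! Writing `φ_λ(x) ^ p = (2πλ) ^ (-p/2) · exp (-p x² / (2λ))`, the normalising powers on the left
combine to `(2πλ) ^ (-1/2)`, so the claim reduces to the exponent bound
`y² ≤ (1 + γ) x² + 4 ε² / γ`. Young's inequality `2 x (y - x) ≤ γ x² + (y - x)² / γ` gives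
`y² ≤ (1 + γ) x² + (1 + 1/γ) ε²`, and `1 + 1/γ ≤ 4/γ` as `γ ≤ 1`. -/

noncomputable def gaussDensity (l x : ℝ) : ℝ :=
  (Real.sqrt (2 * Real.pi * l))⁻¹ * Real.exp (-(x ^ 2) / (2 * l))

open Real

lemma gaussDensity_rpow {l : ℝ} (hl : 0 ≤ l) (x p : ℝ) :
    gaussDensity l x ^ p = (2 * π * l) ^ (-p / 2) * exp (-(p * x ^ 2) / (2 * l)) := by
  have h2πl : 0 ≤ 2 * π * l := by positivity
  rw [gaussDensity, mul_rpow (by positivity) (exp_pos _).le, sqrt_eq_rpow,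
    inv_rpow (rpow_nonneg h2πl _), ← rpow_mul h2πl, ← rpow_neg h2πl, ← exp_mul]
  congr 2 <;> ring

lemma gaussDensity_eq_rpow {l : ℝ} (hl : 0 ≤ l) (x : ℝ) :
    gaussDensity l x = (2 * π * l) ^ (-1 / 2 : ℝ) * exp (-(x ^ 2) / (2 * l)) := by
  simpa using gaussDensity_rpow hl x 1

lemma sq_le_one_add_mul_sq_add {γ : ℝ} (hγ : 0 < γ) (x y : ℝ) :
    y ^ 2 ≤ (1 + γ) * x ^ 2 + (1 + γ⁻¹) * (y - x) ^ 2 := by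
  have young : 2 * x * (y - x) ≤ γ * x ^ 2 + γ⁻¹ * (y - x) ^ 2 := by
    have : γ * x ^ 2 + γ⁻¹ * (y - x) ^ 2 - 2 * x * (y - x) = γ⁻¹ * (γ * x - (y - x)) ^ 2 := by
      field_simp
      ring
    linarith [this, mul_nonneg (inv_nonneg.2 hγ.le) (sq_nonneg (γ * x - (y - x)))]
  nlinarith [young]

lemma sq_le_of_abs_sub_le {γ ε x y : ℝ} (hγ : 0 < γ) (hxy : |x - y| ≤ ε) :
    y ^ 2 ≤ (1 + γ) * x ^ 2 + (1 + γ⁻¹) * ε ^ 2 := by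
  have hd : (y - x) ^ 2 ≤ ε ^ 2 := by
    rw [← sq_abs, abs_sub_comm]
    exact pow_le_pow_left₀ (abs_nonneg _) hxy 2
  calc y ^ 2 ≤ (1 + γ) * x ^ 2 + (1 + γ⁻¹) * (y - x) ^ 2 := sq_le_one_add_mul_sq_add hγ x y
    _ ≤ (1 + γ) * x ^ 2 + (1 + γ⁻¹) * ε ^ 2 := by gcongr

theorem gauss_nearby_lower_bound_general (l ε γ x y : ℝ) (hl : 0 < l)
    (hγ0 : 0 < γ) (hγ1 : γ ≤ 1) (hxy : |x - y| < ε) :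
    (2 * Real.pi * l) ^ (γ / 2) * gaussDensity l x ^ (1 + γ) *
        Real.exp (-(2 * ε ^ 2) / (γ * l)) ≤ gaussDensity l y := by
  have hexp : -((1 + γ) * x ^ 2) / (2 * l) + -(2 * ε ^ 2) / (γ * l) ≤ -(y ^ 2) / (2 * l) := by
    have hcoef : (1 + γ⁻¹) * ε ^ 2 ≤ 4 * ε ^ 2 / γ := by
      rw [div_eq_mul_inv, mul_comm (4 * ε ^ 2), ← mul_assoc]
      gcongr
      linarith [one_le_inv_iff₀.2 ⟨hγ0, hγ1⟩]
    have key := (sq_le_of_abs_sub_le hγ0 hxy.le).trans (add_le_add_right hcoef _)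
    have hfactor : -((1 + γ) * x ^ 2) / (2 * l) + -(2 * ε ^ 2) / (γ * l)
        = -((1 + γ) * x ^ 2 + 4 * ε ^ 2 / γ) / (2 * l) := by
      field_simp
      ring
    rw [hfactor]
    gcongr
  calc (2 * π * l) ^ (γ / 2) * gaussDensity l x ^ (1 + γ) * exp (-(2 * ε ^ 2) / (γ * l))
      = (2 * π * l) ^ (-1 / 2 : ℝ) *
          exp (-((1 + γ) * x ^ 2) / (2 * l) + -(2 * ε ^ 2) / (γ * l)) := by
        rw [gaussDensity_rpow hl.le, exp_add, ← mul_assoc, ← mul_assoc,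
          ← rpow_add (by positivity)]
        ring_nf
    _ ≤ (2 * π * l) ^ (-1 / 2 : ℝ) * exp (-(y ^ 2) / (2 * l)) := by gcongr
    _ = gaussDensity l y := (gaussDensity_eq_rpow hl.le y).symm

theorem gauss_nearby_lower_bound (l ε γ x y : ℝ) (hl : 0 < l) (hε : 0 < ε)
    (hγ0 : 0 < γ) (hγ1 : γ ≤ 1) (hxy : |x - y| < ε) :
    (2 * Real.pi * l) ^ (γ / 2) * gaussDensity l x ^ (1 + γ) *
        Real.exp (-(2 * ε ^ 2) / (γ * l)) ≤ gaussDensity l y :=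
  gauss_nearby_lower_bound_general l ε γ x y hl hγ0 hγ1 hxy
end

section
/- Let X, Y, Z be real random variables with Y integrable, Z independent of (X,Y), and Z admitting a strictly positive bounded density f_Z. Set ζ = X + Z. Then almost surely, E[Y | ζ] = E[Y · f_Z(x − X)]|_{x=ζ} / E[f_Z(x − X)]|_{x=ζ}. -/
/-! By independence, the law of `((X, Y), Z)` is `law(X, Y) ⊗ fZ · volume`, and the shear
`(p, z) ↦ (p, p.1 + z)` preserves `law(X, Y) ⊗ volume`; hence `((X, Y), X + Z)` has density
`fZ (t - x)` with respect to `law(X, Y) ⊗ volume`. Fubini then gives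
`E[V φ(ζ)] = ∫ φ(t) E[V fZ(t - X)] dt`, so that both `Y` and `g(ζ)`, with
`g t = E[Y fZ(t - X)] / E[fZ(t - X)]` (the denominator is positive), integrate over `{ζ ∈ B}`
to `∫_B E[Y fZ(t - X)] dt`. -/

open MeasureTheory ProbabilityTheory
open scoped ENNReal

theorem integral_pos_of_pos_of_le {Ω : Type*} [MeasurableSpace Ω] {μ : Measure Ω}
    [IsFiniteMeasure μ] [NeZero μ] {g : Ω → ℝ} {M : ℝ} (hg : Measurable g) (hpos : ∀ a, 0 < g a)
    (hM : ∀ a, g a ≤ M) : 0 < ∫ a, g a ∂μ := by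
  have hint : Integrable g μ := Integrable.of_bound hg.aestronglyMeasurable M
    (ae_of_all _ fun a => (Real.norm_of_nonneg (hpos a).le).trans_le (hM a))
  rw [integral_pos_iff_support_of_nonneg (fun a => (hpos a).le) hint]
  simp [Function.support, (hpos _).ne', NeZero.ne μ]

namespace ProbabilityTheory

section JointLaw

variable {Ω E : Type*} [MeasurableSpace Ω] [MeasurableSpace E] {μ : Measure Ω} [IsFiniteMeasure μ]
  {W : Ω → E} {Z : Ω → ℝ} {ξ : E → ℝ}

theorem IndepFun.map_prodMk_add_eq_withDensity {f : ℝ → ℝ≥0∞} (hW : Measurable W)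
    (hZ : Measurable Z) (hξ : Measurable ξ) (hf : Measurable f)
    (hdens : μ.map Z = volume.withDensity f) (hindep : IndepFun W Z μ) :
    μ.map (fun ω => (W ω, ξ (W ω) + Z ω))
      = ((μ.map W).prod volume).withDensity fun p => f (p.2 - ξ p.1) := by
  set S : E × ℝ → E × ℝ := fun p => (p.1, ξ p.1 + p.2)
  have hS : MeasurePreserving S ((μ.map W).prod volume) ((μ.map W).prod volume) :=
    (MeasurePreserving.id _).skew_product (by fun_prop)
      (ae_of_all _ fun e => map_add_left_eq_self volume (ξ e))
  have hlaw : μ.map (fun ω => (W ω, Z ω))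
      = ((μ.map W).prod volume).withDensity fun p => f p.2 := by
    rw [(indepFun_iff_map_prod_eq_prod_map_map hW.aemeasurable hZ.aemeasurable).mp hindep, hdens,
      prod_withDensity_right hf]
  have hcomp : (fun ω => (W ω, ξ (W ω) + Z ω)) = S ∘ fun ω => (W ω, Z ω) := rfl
  rw [hcomp, ← Measure.map_map hS.measurable (hW.prodMk hZ), hlaw]
  refine Measure.ext_of_lintegral _ fun φ hφ => ?_
  rw [lintegral_map hφ hS.measurable,
    lintegral_withDensity_eq_lintegral_mul _ (by fun_prop) (by fun_prop)]
  conv_rhs => rw [lintegral_withDensity_eq_lintegral_mul _ (by fun_prop) (by fun_prop),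
    ← hS.lintegral_comp (by fun_prop)]
  simp [S]

variable {f : ℝ → ℝ} {F : E × ℝ → ℝ}

theorem IndepFun.integral_comp_prodMk_add (hW : Measurable W) (hZ : Measurable Z)
    (hξ : Measurable ξ) (hf : Measurable f) (hf0 : ∀ z, 0 ≤ f z)
    (hdens : μ.map Z = volume.withDensity fun z => ENNReal.ofReal (f z))
    (hindep : IndepFun W Z μ) (hF : Measurable F) :
    ∫ ω, F (W ω, ξ (W ω) + Z ω) ∂μ = ∫ p, F p * f (p.2 - ξ p.1) ∂(μ.map W).prod volume := by
  rw [← integral_map (by fun_prop) hF.aestronglyMeasurable,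
    hindep.map_prodMk_add_eq_withDensity hW hZ hξ hf.ennreal_ofReal hdens,
    integral_withDensity_eq_integral_toReal_smul (by fun_prop) (ae_of_all _ fun _ => by simp)]
  simp only [ENNReal.toReal_ofReal (hf0 _), smul_eq_mul, mul_comm]

theorem IndepFun.integrable_comp_prodMk_add_iff (hW : Measurable W) (hZ : Measurable Z)
    (hξ : Measurable ξ) (hf : Measurable f) (hf0 : ∀ z, 0 ≤ f z)
    (hdens : μ.map Z = volume.withDensity fun z => ENNReal.ofReal (f z))
    (hindep : IndepFun W Z μ) (hF : Measurable F) :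
    Integrable (fun ω => F (W ω, ξ (W ω) + Z ω)) μ
      ↔ Integrable (fun p => F p * f (p.2 - ξ p.1)) ((μ.map W).prod volume) := by
  refine (integrable_map_measure hF.aestronglyMeasurable (by fun_prop)).symm.trans ?_
  rw [hindep.map_prodMk_add_eq_withDensity hW hZ hξ hf.ennreal_ofReal hdens,
    integrable_withDensity_iff (by fun_prop) (ae_of_all _ fun _ => by simp)]
  simp only [ENNReal.toReal_ofReal (hf0 _)]

end JointLaw

section Convolution

variable {Ω : Type*} [MeasurableSpace Ω] {μ : Measure Ω} [IsFiniteMeasure μ] {X V Z : Ω → ℝ}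
  {fZ φ : ℝ → ℝ}

theorem IndepFun.integral_mul_comp_add (hX : Measurable X) (hV : Measurable V) (hZ : Measurable Z)
    (hfZ : Measurable fZ) (hfZ0 : ∀ z, 0 ≤ fZ z)
    (hdens : μ.map Z = volume.withDensity fun z => ENNReal.ofReal (fZ z))
    (hindep : IndepFun (fun ω => (X ω, V ω)) Z μ) (hφ : Measurable φ)
    (hint : Integrable (fun ω => V ω * φ (X ω + Z ω)) μ) :
    ∫ ω, V ω * φ (X ω + Z ω) ∂μ = ∫ t, φ t * ∫ a, V a * fZ (t - X a) ∂μ := by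
  have hF : Measurable fun q : (ℝ × ℝ) × ℝ => q.1.2 * φ q.2 := by fun_prop
  have hprod := (hindep.integrable_comp_prodMk_add_iff (hX.prodMk hV) hZ measurable_fst hfZ hfZ0
    hdens hF).mp hint
  calc ∫ ω, V ω * φ (X ω + Z ω) ∂μ
      = ∫ q, q.1.2 * φ q.2 * fZ (q.2 - q.1.1) ∂(μ.map fun ω => (X ω, V ω)).prod volume :=
        hindep.integral_comp_prodMk_add (hX.prodMk hV) hZ measurable_fst hfZ hfZ0 hdens hF
    _ = ∫ t, ∫ p, p.2 * φ t * fZ (t - p.1) ∂μ.map fun ω => (X ω, V ω) :=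
        integral_prod_symm _ hprod
    _ = ∫ t, φ t * ∫ a, V a * fZ (t - X a) ∂μ := by
        refine integral_congr_ae (ae_of_all _ fun t => ?_)
        dsimp only
        rw [integral_map (by fun_prop) (by fun_prop), ← integral_const_mul]
        congr 1 with a
        ring

theorem IndepFun.setIntegral_preimage_add (hX : Measurable X) (hV : Measurable V)
    (hZ : Measurable Z) (hfZ : Measurable fZ) (hfZ0 : ∀ z, 0 ≤ fZ z)
    (hdens : μ.map Z = volume.withDensity fun z => ENNReal.ofReal (fZ z))
    (hindep : IndepFun (fun ω => (X ω, V ω)) Z μ) (hφ : Measurable φ)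
    (hint : Integrable (fun ω => V ω * φ (X ω + Z ω)) μ) {B : Set ℝ} (hB : MeasurableSet B) :
    ∫ ω in (fun ω => X ω + Z ω) ⁻¹' B, V ω * φ (X ω + Z ω) ∂μ
      = ∫ t in B, φ t * ∫ a, V a * fZ (t - X a) ∂μ := by
  have hind : ∀ ω, ((fun ω => X ω + Z ω) ⁻¹' B).indicator (fun ω => V ω * φ (X ω + Z ω)) ω
      = V ω * B.indicator φ (X ω + Z ω) := fun ω => by
    by_cases hω : X ω + Z ω ∈ B <;> simp [hω]
  have hζB : MeasurableSet ((fun ω => X ω + Z ω) ⁻¹' B) := (by fun_prop : Measurable _) hB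
  rw [← integral_indicator hζB, funext hind,
    hindep.integral_mul_comp_add hX hV hZ hfZ hfZ0 hdens (hφ.indicator hB)
      ((hint.indicator hζB).congr (ae_of_all _ hind)),
    ← integral_indicator hB]
  congr 1 with t
  by_cases ht : t ∈ B <;> simp [ht]

theorem IndepFun.integrable_integral_mul_sub (hX : Measurable X) (hV : Measurable V)
    (hZ : Measurable Z) (hfZ : Measurable fZ) (hfZ0 : ∀ z, 0 ≤ fZ z)
    (hdens : μ.map Z = volume.withDensity fun z => ENNReal.ofReal (fZ z))
    (hindep : IndepFun (fun ω => (X ω, V ω)) Z μ) (hVint : Integrable V μ) :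
    Integrable (fun t => ∫ a, V a * fZ (t - X a) ∂μ) volume := by
  have hprod := (hindep.integrable_comp_prodMk_add_iff (F := fun q => q.1.2) (hX.prodMk hV) hZ
    measurable_fst hfZ hfZ0 hdens (by fun_prop)).mp hVint
  refine hprod.integral_prod_right.congr (ae_of_all _ fun t => ?_)
  exact integral_map (by fun_prop) (by fun_prop)

theorem IndepFun.integrable_comp_add {M : ℝ} (hX : Measurable X) (hZ : Measurable Z)
    (hfZ : Measurable fZ) (hfZ0 : ∀ z, 0 ≤ fZ z) (hM : ∀ z, fZ z ≤ M)
    (hdens : μ.map Z = volume.withDensity fun z => ENNReal.ofReal (fZ z))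
    (hindep : IndepFun X Z μ) (hφ : Measurable φ)
    (hint : Integrable (fun t => φ t * ∫ a, fZ (t - X a) ∂μ) volume) :
    Integrable (fun ω => φ (X ω + Z ω)) μ := by
  refine (hindep.integrable_comp_prodMk_add_iff (F := fun q => φ q.2) hX hZ measurable_id hfZ
    hfZ0 hdens (by fun_prop)).mpr ?_
  rw [integrable_prod_iff' (by fun_prop)]
  constructor
  · refine ae_of_all _ fun t => (Integrable.of_bound
      (hfZ.comp (by fun_prop)).aestronglyMeasurable M (ae_of_all _ fun x => ?_)).const_mul (φ t)
    exact (Real.norm_of_nonneg (hfZ0 _)).trans_le (hM _)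
  · refine hint.norm.congr (ae_of_all _ fun t => ?_)
    simp only [id, norm_mul, Real.norm_of_nonneg (hfZ0 _), integral_const_mul]
    rw [integral_map (f := fun x => fZ (t - x)) hX.aemeasurable
      (hfZ.comp (by fun_prop)).aestronglyMeasurable,
      Real.norm_of_nonneg (integral_nonneg fun _ => hfZ0 _)]

end Convolution

end ProbabilityTheory

theorem condExp_convolution_formula {Ω : Type*} [MeasurableSpace Ω]
    (μ : Measure Ω) [IsProbabilityMeasure μ]
    (X Y Z : Ω → ℝ) (hX : Measurable X) (hY : Measurable Y) (hZ : Measurable Z)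
    (hYint : Integrable Y μ)
    (fZ : ℝ → ℝ) (hfZmeas : Measurable fZ) (hfZpos : ∀ z, 0 < fZ z)
    (hfZbdd : ∃ M : ℝ, ∀ z, fZ z ≤ M)
    (hdens : Measure.map Z μ = volume.withDensity fun z => ENNReal.ofReal (fZ z))
    (hindep : IndepFun (fun ω => (X ω, Y ω)) Z μ) :
    μ[Y | MeasurableSpace.comap (fun ω => X ω + Z ω) inferInstance] =ᵐ[μ]
      fun ω =>
        (∫ a, Y a * fZ ((X ω + Z ω) - X a) ∂μ) / (∫ a, fZ ((X ω + Z ω) - X a) ∂μ) := by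
  obtain ⟨M, hM⟩ := hfZbdd
  have hfZ0 : ∀ z, 0 ≤ fZ z := fun z => (hfZpos z).le
  set N : ℝ → ℝ := fun t => ∫ a, Y a * fZ (t - X a) ∂μ
  set h : ℝ → ℝ := fun t => ∫ a, fZ (t - X a) ∂μ
  have hh_pos : ∀ t, 0 < h t := fun t =>
    integral_pos_of_pos_of_le (by fun_prop) (fun _ => hfZpos _) (fun _ => hM _)
  have hN : Integrable N volume :=
    hindep.integrable_integral_mul_sub hX hY hZ hfZmeas hfZ0 hdens hYint
  have hg : Measurable fun t => N t / h t := by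
    refine .div (StronglyMeasurable.integral_prod_right ?_).measurable
      (StronglyMeasurable.integral_prod_right ?_).measurable <;>
    exact Measurable.stronglyMeasurable (by fun_prop)
  have hgζ : Integrable (fun ω => N (X ω + Z ω) / h (X ω + Z ω)) μ :=
    (hindep.comp measurable_fst measurable_id).integrable_comp_add hX hZ hfZmeas hfZ0 hM hdens hg
      (hN.congr (ae_of_all _ fun t => (div_mul_cancel₀ _ (hh_pos t).ne').symm))
  have hζ : Measurable fun ω => X ω + Z ω := by fun_prop
  refine (ae_eq_condExp_of_forall_setIntegral_eq hζ.comap_le hYint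
    (fun _ _ _ => hgζ.integrableOn) ?_ ?_).symm
  · rintro _ ⟨B, hB, rfl⟩ -
    have hL := hindep.setIntegral_preimage_add hX hY hZ hfZmeas hfZ0 hdens
      (φ := fun _ => 1) measurable_const (by simpa using hYint) hB
    have hR := (hindep.comp (measurable_fst.prodMk measurable_const) measurable_id
      (φ := fun p => (p.1, (1 : ℝ)))).setIntegral_preimage_add hX measurable_const hZ hfZmeas
      hfZ0 hdens hg (by simpa using hgζ) hB
    simp only [mul_one, one_mul] at hL hR
    rw [hL, hR]
    exact setIntegral_congr_fun hB fun t _ => div_mul_cancel₀ _ (hh_pos t).ne'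
  · exact (hg.comp (Measurable.of_comap_le le_rfl)).aestronglyMeasurable
end

section
/- Let (α_k)_{k=1}^n, (β_k)_{k=1}^n, (γ_k)_{k=1}^n, (Δ_k)_{k=1}^n be positive sequences with α_k ≤ A and a ≤ γ_k ≤ b for constants a ≤ 1 ≤ A, b. Let δ > 0 and suppose |α_k − β_k| ≤ C·max{α_k^p, β_k^p}·Δ_k for some C > 0 and 1/2 ≤ p ≤ 1. Then |((1/n)Σα_k + δ)/((1/n)Σα_kγ_k + δ) − ((1/n)Σβ_k + δ)/((1/n)Σβ_kγ_k + δ)| ≤ K · C · max_j max{α_j, β_j}^{p−1/2} · δ^{−1/2} · √((1/n)Σ_k Δ_k²), where K is a constant depending only on a and b; one may take K = (1 + b/a)·(1/a). -/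
open Finset

private lemma sqrt_amgm {y δ : ℝ} (hy : 0 ≤ y) (hδ : 0 ≤ δ) :
    Real.sqrt y * (2 * Real.sqrt δ) ≤ y + δ := by
  nlinarith [Real.sq_sqrt hy, Real.sq_sqrt hδ, Real.sqrt_nonneg y, Real.sqrt_nonneg δ,
    sq_nonneg (Real.sqrt y - Real.sqrt δ)]

private lemma ratio_diff_le {a b SA TA SB TB E : ℝ} (ha : 0 < a) (hb : 0 ≤ b)
    (hSA : 0 < SA) (hSB : 0 < SB) (hTA : 0 < TA) (hTB : 0 < TB)
    (h1 : a * SA ≤ TA) (h2 : a * SB ≤ TB)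
    (h3 : |SA - SB| ≤ E) (h4 : |TA - TB| ≤ b * E) :
    a * |SA / TA - SB / TB| * (TA * TB) ≤ (a + b) * E * TB ∧
    a * |SA / TA - SB / TB| * (TA * TB) ≤ (a + b) * E * TA := by
  have hE : 0 ≤ E := le_trans (abs_nonneg _) h3
  have hd : |SA / TA - SB / TB| = |SA * TB - SB * TA| / (TA * TB) := by
    rw [div_sub_div _ _ hTA.ne' hTB.ne', abs_div, abs_of_pos (mul_pos hTA hTB),
      mul_comm TA SB]
  have hsimp : a * |SA / TA - SB / TB| * (TA * TB) = a * |SA * TB - SB * TA| := by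
    rw [hd, mul_assoc, div_mul_cancel₀ _ (mul_pos hTA hTB).ne']
  rw [hsimp]
  have habs1 : |SA * TB - SB * TA| ≤ E * TB + SB * (b * E) := by
    have heq : SA * TB - SB * TA = (SA - SB) * TB + SB * (TB - TA) := by ring
    rw [heq]
    calc |(SA - SB) * TB + SB * (TB - TA)| ≤ |(SA - SB) * TB| + |SB * (TB - TA)| :=
          abs_add_le _ _
      _ = |SA - SB| * TB + SB * |TB - TA| := by
          rw [abs_mul, abs_mul, abs_of_pos hTB, abs_of_pos hSB]
      _ ≤ E * TB + SB * (b * E) := by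
          have h4' : |TB - TA| ≤ b * E := abs_sub_comm TA TB ▸ h4
          exact add_le_add (mul_le_mul_of_nonneg_right h3 hTB.le)
            (mul_le_mul_of_nonneg_left h4' hSB.le)
  have habs2 : |SA * TB - SB * TA| ≤ E * TA + SA * (b * E) := by
    have heq : SA * TB - SB * TA = (SA - SB) * TA + SA * (TB - TA) := by ring
    rw [heq]
    calc |(SA - SB) * TA + SA * (TB - TA)| ≤ |(SA - SB) * TA| + |SA * (TB - TA)| :=
          abs_add_le _ _
      _ = |SA - SB| * TA + SA * |TB - TA| := by
          rw [abs_mul, abs_mul, abs_of_pos hTA, abs_of_pos hSA]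
      _ ≤ E * TA + SA * (b * E) := by
          have h4' : |TB - TA| ≤ b * E := abs_sub_comm TA TB ▸ h4
          exact add_le_add (mul_le_mul_of_nonneg_right h3 hTA.le)
            (mul_le_mul_of_nonneg_left h4' hSA.le)
  constructor
  · nlinarith [mul_le_mul_of_nonneg_left habs1 ha.le,
      mul_le_mul_of_nonneg_left h2 (mul_nonneg hb hE)]
  · nlinarith [mul_le_mul_of_nonneg_left habs2 ha.le,
      mul_le_mul_of_nonneg_left h1 (mul_nonneg hb hE)]

set_option maxHeartbeats 4000000 in
theorem regularised_empirical_ratio_estimate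
    (n : ℕ) (hn : 0 < n) (α β γs Δ : ℕ → ℝ)
    (hα : ∀ k ∈ Finset.range n, 0 < α k) (hβ : ∀ k ∈ Finset.range n, 0 < β k)
    (hγ : ∀ k ∈ Finset.range n, 0 < γs k) (hΔ : ∀ k ∈ Finset.range n, 0 < Δ k)
    (a b A : ℝ) (ha1 : a ≤ 1) (hA1 : 1 ≤ A) (hb1 : 1 ≤ b) (ha0 : 0 < a)
    (hαA : ∀ k ∈ Finset.range n, α k ≤ A)
    (hγl : ∀ k ∈ Finset.range n, a ≤ γs k) (hγu : ∀ k ∈ Finset.range n, γs k ≤ b)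
    (δ C p : ℝ) (hδ : 0 < δ) (hC : 0 < C) (hp1 : 1 / 2 ≤ p) (hp2 : p ≤ 1)
    (hclose : ∀ k ∈ Finset.range n,
      |α k - β k| ≤ C * max (α k ^ p) (β k ^ p) * Δ k) :
    |((∑ k ∈ Finset.range n, α k) / n + δ) /
        ((∑ k ∈ Finset.range n, α k * γs k) / n + δ) -
      ((∑ k ∈ Finset.range n, β k) / n + δ) /
        ((∑ k ∈ Finset.range n, β k * γs k) / n + δ)|
      ≤ (1 + b / a) * (1 / a) * C *
          ((Finset.range n).sup' (Finset.nonempty_range_iff.mpr hn.ne')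
              fun k => max (α k) (β k)) ^ (p - 1 / 2) *
          δ ^ (-(1 / 2) : ℝ) *
          Real.sqrt ((∑ k ∈ Finset.range n, Δ k ^ 2) / n) := by
  have hne : (Finset.range n).Nonempty := Finset.nonempty_range_iff.mpr hn.ne'
  have hN : (0:ℝ) < n := Nat.cast_pos.mpr hn
  set M : ℝ := (Finset.range n).sup' (Finset.nonempty_range_iff.mpr hn.ne')
      fun k => max (α k) (β k) with hMdef
  have hMle : ∀ k ∈ Finset.range n, max (α k) (β k) ≤ M := fun k hk =>
    Finset.le_sup' (fun k => max (α k) (β k)) hk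
  have hM0 : 0 < M := lt_of_lt_of_le (lt_max_of_lt_left (hα 0 (mem_range.mpr hn)))
    (hMle 0 (mem_range.mpr hn))
  have hMp : 0 < M ^ (p - 1/2 : ℝ) := Real.rpow_pos_of_pos hM0 _
  set sA := (∑ k ∈ Finset.range n, α k) / (n:ℝ) with hsAdef
  set sB := (∑ k ∈ Finset.range n, β k) / (n:ℝ) with hsBdef
  set tA := (∑ k ∈ Finset.range n, α k * γs k) / (n:ℝ) with htAdef
  set tB := (∑ k ∈ Finset.range n, β k * γs k) / (n:ℝ) with htBdef
  set D := (∑ k ∈ Finset.range n, Δ k ^ 2) / (n:ℝ) with hDdef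
  set E := (∑ k ∈ Finset.range n, |α k - β k|) / (n:ℝ) with hEdef
  have hsA0 : 0 < sA := div_pos (Finset.sum_pos hα hne) hN
  have hsB0 : 0 < sB := div_pos (Finset.sum_pos hβ hne) hN
  have hD0 : 0 ≤ D := div_nonneg (Finset.sum_nonneg fun k _ => sq_nonneg _) hN.le
  -- denominators dominate
  have htA : a * sA ≤ tA := by
    rw [hsAdef, htAdef, ← mul_div_assoc]
    gcongr
    rw [Finset.mul_sum]
    refine Finset.sum_le_sum fun k hk => ?_
    rw [mul_comm]
    exact mul_le_mul_of_nonneg_left (hγl k hk) (hα k hk).le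
  have htB : a * sB ≤ tB := by
    rw [hsBdef, htBdef, ← mul_div_assoc]
    gcongr
    rw [Finset.mul_sum]
    refine Finset.sum_le_sum fun k hk => ?_
    rw [mul_comm]
    exact mul_le_mul_of_nonneg_left (hγl k hk) (hβ k hk).le
  have hTA1 : a * (sA + δ) ≤ tA + δ := by nlinarith
  have hTB1 : a * (sB + δ) ≤ tB + δ := by nlinarith
  have hTA0 : 0 < tA + δ := lt_of_lt_of_le (by positivity) hTA1
  have hTB0 : 0 < tB + δ := lt_of_lt_of_le (by positivity) hTB1
  -- |sA - sB| ≤ E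
  have h3 : |sA + δ - (sB + δ)| ≤ E := by
    have heq : sA + δ - (sB + δ) = (∑ k ∈ Finset.range n, (α k - β k)) / n := by
      rw [hsAdef, hsBdef, Finset.sum_sub_distrib]; ring
    rw [heq, hEdef, abs_div, abs_of_pos hN]
    gcongr
    exact Finset.abs_sum_le_sum_abs _ _
  -- |tA - tB| ≤ b * E
  have h4 : |tA + δ - (tB + δ)| ≤ b * E := by
    have heq : tA + δ - (tB + δ) = (∑ k ∈ Finset.range n, (α k - β k) * γs k) / n := by
      rw [htAdef, htBdef,
        show (∑ k ∈ Finset.range n, (α k - β k) * γs k) =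
          (∑ k ∈ Finset.range n, α k * γs k) - ∑ k ∈ Finset.range n, β k * γs k by
          rw [← Finset.sum_sub_distrib]; exact Finset.sum_congr rfl fun k _ => by ring]
      ring
    rw [heq, hEdef, abs_div, abs_of_pos hN, ← mul_div_assoc]
    gcongr
    calc |∑ k ∈ Finset.range n, (α k - β k) * γs k|
        ≤ ∑ k ∈ Finset.range n, |(α k - β k) * γs k| := Finset.abs_sum_le_sum_abs _ _
      _ ≤ ∑ k ∈ Finset.range n, b * |α k - β k| := by
          refine Finset.sum_le_sum fun k hk => ?_
          rw [abs_mul, abs_of_pos (hγ k hk), mul_comm]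
          exact mul_le_mul_of_nonneg_right (hγu k hk) (abs_nonneg _)
      _ = b * ∑ k ∈ Finset.range n, |α k - β k| := by rw [Finset.mul_sum]
  -- bound E using hclose + Cauchy-Schwarz
  have hEb : E ≤ C * M ^ (p - 1/2 : ℝ) * (Real.sqrt sA + Real.sqrt sB) * Real.sqrt D := by
    have step1 : ∀ k ∈ Finset.range n,
        |α k - β k| ≤ C * M ^ (p - 1/2 : ℝ) * (Real.sqrt (max (α k) (β k)) * Δ k) := by
      intro k hk
      have hmax0 : 0 < max (α k) (β k) := lt_max_of_lt_left (hα k hk)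
      have hmaxeq : max (α k ^ p) (β k ^ p) = max (α k) (β k) ^ p := by
        rcases le_total (α k) (β k) with h | h
        · rw [max_eq_right h, max_eq_right (Real.rpow_le_rpow (hα k hk).le h (by linarith))]
        · rw [max_eq_left h, max_eq_left (Real.rpow_le_rpow (hβ k hk).le h (by linarith))]
      have hsplit : max (α k) (β k) ^ p
          = max (α k) (β k) ^ (p - 1/2 : ℝ) * Real.sqrt (max (α k) (β k)) := by
        rw [Real.sqrt_eq_rpow, ← Real.rpow_add hmax0]
        norm_num
      have hbd : max (α k) (β k) ^ p ≤ M ^ (p - 1/2 : ℝ) * Real.sqrt (max (α k) (β k)) := by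
        rw [hsplit]
        exact mul_le_mul_of_nonneg_right
          (Real.rpow_le_rpow hmax0.le (hMle k hk) (by linarith)) (Real.sqrt_nonneg _)
      calc |α k - β k| ≤ C * max (α k ^ p) (β k ^ p) * Δ k := hclose k hk
        _ = C * (max (α k) (β k) ^ p) * Δ k := by rw [hmaxeq]
        _ ≤ C * (M ^ (p - 1/2 : ℝ) * Real.sqrt (max (α k) (β k))) * Δ k :=
            mul_le_mul_of_nonneg_right (mul_le_mul_of_nonneg_left hbd hC.le) (hΔ k hk).le
        _ = C * M ^ (p - 1/2 : ℝ) * (Real.sqrt (max (α k) (β k)) * Δ k) := by ring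
    have step2 : (∑ k ∈ Finset.range n, |α k - β k|)
        ≤ C * M ^ (p - 1/2 : ℝ) * ∑ k ∈ Finset.range n, Real.sqrt (max (α k) (β k)) * Δ k := by
      rw [Finset.mul_sum]
      exact Finset.sum_le_sum step1
    have hCS : (∑ k ∈ Finset.range n, Real.sqrt (max (α k) (β k)) * Δ k)
        ≤ Real.sqrt (∑ k ∈ Finset.range n, max (α k) (β k)) *
          Real.sqrt (∑ k ∈ Finset.range n, Δ k ^ 2) := by
      have h := Finset.sum_mul_sq_le_sq_mul_sq (Finset.range n)
        (fun k => Real.sqrt (max (α k) (β k))) Δ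
      have hsq : (∑ k ∈ Finset.range n, Real.sqrt (max (α k) (β k)) ^ 2)
          = ∑ k ∈ Finset.range n, max (α k) (β k) :=
        Finset.sum_congr rfl fun k hk => Real.sq_sqrt (le_max_of_le_left (hα k hk).le)
      rw [hsq] at h
      have hnn : 0 ≤ ∑ k ∈ Finset.range n, Real.sqrt (max (α k) (β k)) * Δ k :=
        Finset.sum_nonneg fun k hk => mul_nonneg (Real.sqrt_nonneg _) (hΔ k hk).le
      calc (∑ k ∈ Finset.range n, Real.sqrt (max (α k) (β k)) * Δ k)
          = Real.sqrt ((∑ k ∈ Finset.range n, Real.sqrt (max (α k) (β k)) * Δ k) ^ 2) :=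
            (Real.sqrt_sq hnn).symm
        _ ≤ Real.sqrt ((∑ k ∈ Finset.range n, max (α k) (β k)) *
              ∑ k ∈ Finset.range n, Δ k ^ 2) := Real.sqrt_le_sqrt h
        _ = _ := Real.sqrt_mul (Finset.sum_nonneg fun k hk =>
              le_max_of_le_left (hα k hk).le) _
    have hsqrtsum : Real.sqrt (∑ k ∈ Finset.range n, max (α k) (β k))
        ≤ Real.sqrt (∑ k ∈ Finset.range n, α k) + Real.sqrt (∑ k ∈ Finset.range n, β k) := by
      have hmaxsum : (∑ k ∈ Finset.range n, max (α k) (β k))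
          ≤ (∑ k ∈ Finset.range n, α k) + ∑ k ∈ Finset.range n, β k := by
        rw [← Finset.sum_add_distrib]
        exact Finset.sum_le_sum fun k hk =>
          max_le (by linarith [hβ k hk]) (by linarith [hα k hk])
      have hA0 : (0:ℝ) ≤ ∑ k ∈ Finset.range n, α k := (Finset.sum_pos hα hne).le
      have hB0 : (0:ℝ) ≤ ∑ k ∈ Finset.range n, β k := (Finset.sum_pos hβ hne).le
      refine le_trans (Real.sqrt_le_sqrt hmaxsum) ?_
      nlinarith [Real.sq_sqrt hA0, Real.sq_sqrt hB0,
        Real.sqrt_nonneg (∑ k ∈ Finset.range n, α k),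
        Real.sqrt_nonneg (∑ k ∈ Finset.range n, β k),
        Real.sq_sqrt (by positivity :
          (0:ℝ) ≤ (∑ k ∈ Finset.range n, α k) + ∑ k ∈ Finset.range n, β k),
        Real.sqrt_nonneg ((∑ k ∈ Finset.range n, α k) + ∑ k ∈ Finset.range n, β k)]
    -- put it together, dividing by n
    have hsum : (∑ k ∈ Finset.range n, |α k - β k|)
        ≤ C * M ^ (p - 1/2 : ℝ) *
          ((Real.sqrt (∑ k ∈ Finset.range n, α k) + Real.sqrt (∑ k ∈ Finset.range n, β k)) *
            Real.sqrt (∑ k ∈ Finset.range n, Δ k ^ 2)) := by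
      refine step2.trans ?_
      refine mul_le_mul_of_nonneg_left ?_ (by positivity)
      refine hCS.trans ?_
      exact mul_le_mul_of_nonneg_right hsqrtsum (Real.sqrt_nonneg _)
    have hEstep : E ≤ (C * M ^ (p - 1/2 : ℝ) *
        ((Real.sqrt (∑ k ∈ Finset.range n, α k) + Real.sqrt (∑ k ∈ Finset.range n, β k)) *
          Real.sqrt (∑ k ∈ Finset.range n, Δ k ^ 2))) / n := by
      rw [hEdef]; gcongr
    refine hEstep.trans (le_of_eq ?_)
    have hA0 : (0:ℝ) ≤ ∑ k ∈ Finset.range n, α k := (Finset.sum_pos hα hne).le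
    have hB0 : (0:ℝ) ≤ ∑ k ∈ Finset.range n, β k := (Finset.sum_pos hβ hne).le
    have hΔ0 : (0:ℝ) ≤ ∑ k ∈ Finset.range n, Δ k ^ 2 :=
      Finset.sum_nonneg fun k _ => sq_nonneg _
    have hsA' : Real.sqrt sA = Real.sqrt (∑ k ∈ Finset.range n, α k) / Real.sqrt (n:ℝ) := by
      rw [hsAdef, Real.sqrt_div hA0]
    have hsB' : Real.sqrt sB = Real.sqrt (∑ k ∈ Finset.range n, β k) / Real.sqrt (n:ℝ) := by
      rw [hsBdef, Real.sqrt_div hB0]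
    have hD' : Real.sqrt D = Real.sqrt (∑ k ∈ Finset.range n, Δ k ^ 2) / Real.sqrt (n:ℝ) := by
      rw [hDdef, Real.sqrt_div hΔ0]
    have hnn : Real.sqrt (n:ℝ) * Real.sqrt (n:ℝ) = (n:ℝ) := Real.mul_self_sqrt hN.le
    rw [hsA', hsB', hD', ← hnn]
    have hsn : Real.sqrt (n:ℝ) ≠ 0 := by positivity
    field_simp
    ring_nf
    rw [Real.sqrt_sq (Real.sqrt_nonneg (n:ℝ))]
  clear_value M sA sB tA tB D E
  -- main assembly
  have hsδ : 0 < Real.sqrt δ := Real.sqrt_pos.mpr hδ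
  obtain ⟨hd1, hd2⟩ := ratio_diff_le ha0 (by linarith : (0:ℝ) ≤ b) (by positivity)
    (by positivity) hTA0 hTB0 hTA1 hTB1 h3 h4
  have hgoal : (1 + b / a) * (1 / a) * C * M ^ (p - 1 / 2 : ℝ) * δ ^ (-(1 / 2) : ℝ) *
      Real.sqrt D
      = (a + b) * (C * M ^ (p - 1/2 : ℝ) * Real.sqrt D) / (a * a * Real.sqrt δ) := by
    rw [Real.rpow_neg hδ.le, ← Real.sqrt_eq_rpow]
    field_simp
  rw [hgoal, le_div_iff₀ (by positivity : (0:ℝ) < a * a * Real.sqrt δ)]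
  have hF0 : 0 ≤ C * M ^ (p - 1/2 : ℝ) * Real.sqrt D := by positivity
  have k1 : Real.sqrt sA * (2 * Real.sqrt δ) ≤ sA + δ := sqrt_amgm hsA0.le hδ.le
  have k2 : Real.sqrt sB * (2 * Real.sqrt δ) ≤ sB + δ := sqrt_amgm hsB0.le hδ.le
  rcases le_total (tA + δ) (tB + δ) with hcmp | hcmp
  · -- TA ≤ TB : use hd2
    have hstep : a * |(sA + δ) / (tA + δ) - (sB + δ) / (tB + δ)| * (tB + δ)
        ≤ (a + b) * E := by
      refine le_of_mul_le_mul_right ?_ hTA0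
      calc a * |(sA + δ) / (tA + δ) - (sB + δ) / (tB + δ)| * (tB + δ) * (tA + δ)
          = a * |(sA + δ) / (tA + δ) - (sB + δ) / (tB + δ)| * ((tA + δ) * (tB + δ)) := by
            ring
        _ ≤ (a + b) * E * (tA + δ) := hd2
    have k3 : a * Real.sqrt δ * (Real.sqrt sA + Real.sqrt sB) ≤ tB + δ := by
      nlinarith [mul_le_mul_of_nonneg_left k1 ha0.le, mul_le_mul_of_nonneg_left k2 ha0.le]
    have hkey : E * (a * Real.sqrt δ) ≤ C * M ^ (p - 1/2 : ℝ) * Real.sqrt D * (tB + δ) := by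
      calc E * (a * Real.sqrt δ)
          ≤ C * M ^ (p - 1/2 : ℝ) * (Real.sqrt sA + Real.sqrt sB) * Real.sqrt D *
            (a * Real.sqrt δ) := mul_le_mul_of_nonneg_right hEb (by positivity)
        _ = C * M ^ (p - 1/2 : ℝ) * Real.sqrt D *
            (a * Real.sqrt δ * (Real.sqrt sA + Real.sqrt sB)) := by ring
        _ ≤ C * M ^ (p - 1/2 : ℝ) * Real.sqrt D * (tB + δ) :=
            mul_le_mul_of_nonneg_left k3 hF0
    refine le_of_mul_le_mul_right ?_ hTB0
    calc |(sA + δ) / (tA + δ) - (sB + δ) / (tB + δ)| * (a * a * Real.sqrt δ) * (tB + δ)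
        = a * |(sA + δ) / (tA + δ) - (sB + δ) / (tB + δ)| * (tB + δ) * (a * Real.sqrt δ) := by
          ring
      _ ≤ (a + b) * E * (a * Real.sqrt δ) :=
          mul_le_mul_of_nonneg_right hstep (by positivity)
      _ = (a + b) * (E * (a * Real.sqrt δ)) := by ring
      _ ≤ (a + b) * (C * M ^ (p - 1/2 : ℝ) * Real.sqrt D * (tB + δ)) :=
          mul_le_mul_of_nonneg_left hkey (by linarith)
      _ = (a + b) * (C * M ^ (p - 1/2 : ℝ) * Real.sqrt D) * (tB + δ) := by ring
  · -- TB ≤ TA : use hd1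
    have hstep : a * |(sA + δ) / (tA + δ) - (sB + δ) / (tB + δ)| * (tA + δ)
        ≤ (a + b) * E := by
      refine le_of_mul_le_mul_right ?_ hTB0
      calc a * |(sA + δ) / (tA + δ) - (sB + δ) / (tB + δ)| * (tA + δ) * (tB + δ)
          = a * |(sA + δ) / (tA + δ) - (sB + δ) / (tB + δ)| * ((tA + δ) * (tB + δ)) := by
            ring
        _ ≤ (a + b) * E * (tB + δ) := hd1
    have k3 : a * Real.sqrt δ * (Real.sqrt sA + Real.sqrt sB) ≤ tA + δ := by
      nlinarith [mul_le_mul_of_nonneg_left k1 ha0.le, mul_le_mul_of_nonneg_left k2 ha0.le]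
    have hkey : E * (a * Real.sqrt δ) ≤ C * M ^ (p - 1/2 : ℝ) * Real.sqrt D * (tA + δ) := by
      calc E * (a * Real.sqrt δ)
          ≤ C * M ^ (p - 1/2 : ℝ) * (Real.sqrt sA + Real.sqrt sB) * Real.sqrt D *
            (a * Real.sqrt δ) := mul_le_mul_of_nonneg_right hEb (by positivity)
        _ = C * M ^ (p - 1/2 : ℝ) * Real.sqrt D *
            (a * Real.sqrt δ * (Real.sqrt sA + Real.sqrt sB)) := by ring
        _ ≤ C * M ^ (p - 1/2 : ℝ) * Real.sqrt D * (tA + δ) :=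
            mul_le_mul_of_nonneg_left k3 hF0
    refine le_of_mul_le_mul_right ?_ hTA0
    calc |(sA + δ) / (tA + δ) - (sB + δ) / (tB + δ)| * (a * a * Real.sqrt δ) * (tA + δ)
        = a * |(sA + δ) / (tA + δ) - (sB + δ) / (tB + δ)| * (tA + δ) * (a * Real.sqrt δ) := by
          ring
      _ ≤ (a + b) * E * (a * Real.sqrt δ) :=
          mul_le_mul_of_nonneg_right hstep (by positivity)
      _ = (a + b) * (E * (a * Real.sqrt δ)) := by ring
      _ ≤ (a + b) * (C * M ^ (p - 1/2 : ℝ) * Real.sqrt D * (tA + δ)) :=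
          mul_le_mul_of_nonneg_left hkey (by linarith)
      _ = (a + b) * (C * M ^ (p - 1/2 : ℝ) * Real.sqrt D) * (tA + δ) := by ring
end

section
/- Let ξ, X be random variables with a² ≤ ξ² ≤ b² a.s. (0 < a ≤ b), let K : ℝ → [0,∞) be C¹ with bounded derivative, and δ > 0. Define Ψ^{−1/2}(y) = √((E[K(y−X)] + δ)/(E[ξ²K(y−X)] + δ)). Then y ↦ Ψ^{−1/2}(y) is Lipschitz continuous with Lipschitz constant at most C'·‖K'‖_∞/δ, where C' depends only on a and b. -/
/-!
Write `G y = E[K(y - X)]` and `H y = E[ξ² K(y - X)]`. Since `K` is `M`-Lipschitz, `G` is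
`M`-Lipschitz and `H` is `b² M`-Lipschitz, and `a² G ≤ H ≤ b² G`. Hence the quotient
`(G + δ) / (H + δ)` is bounded by `1 + a⁻²`, is Lipschitz with constant of order `M / δ` (its
denominator is at least `δ`), and stays above `(1 + b²)⁻¹`, where the square root is Lipschitz.
The integrals need not exist: being translates of one another up to bounded errors, either all of
them are integrable or none is, and in the latter case both integrals vanish.
-/

open MeasureTheory NNReal Set

section ParametricIntegral

variable {α Ω E : Type*} [PseudoMetricSpace α] [MeasurableSpace Ω] {μ : Measure Ω}
  [NormedAddCommGroup E] {F : α → Ω → E} {L : ℝ≥0}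

theorem MeasureTheory.Integrable.of_lipschitzWith_param [IsFiniteMeasure μ] {x y : α}
    (hL : ∀ᵐ ω ∂μ, LipschitzWith L (F · ω)) (hy : AEStronglyMeasurable (F y) μ)
    (hx : Integrable (F x) μ) : Integrable (F y) μ := by
  have hsub : Integrable (fun ω => F y ω - F x ω) μ :=
    Integrable.of_bound (hy.sub hx.aestronglyMeasurable) (L * dist y x)
      (hL.mono fun ω hω => by simpa [dist_eq_norm] using hω.dist_le_mul y x)
  exact (hsub.add hx).congr (ae_of_all _ fun ω => sub_add_cancel _ _)

theorem lipschitzWith_integral [NormedSpace ℝ E] [IsProbabilityMeasure μ]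
    (hF : ∀ x, AEStronglyMeasurable (F x) μ) (hL : ∀ᵐ ω ∂μ, LipschitzWith L (F · ω)) :
    LipschitzWith L fun x => ∫ ω, F x ω ∂μ := by
  by_cases hint : ∀ x, Integrable (F x) μ
  · refine LipschitzWith.of_dist_le_mul fun x y => ?_
    rw [dist_eq_norm, ← integral_sub (hint x) (hint y)]
    simpa using norm_integral_le_of_norm_le_const
      (hL.mono fun ω hω => by simpa [dist_eq_norm] using hω.dist_le_mul x y)
  · obtain ⟨x₀, hx₀⟩ := not_forall.mp hint
    have hzero : (fun x => ∫ ω, F x ω ∂μ) = fun _ => 0 := funext fun x =>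
      integral_undef fun hx => hx₀ (hx.of_lipschitzWith_param hL (hF x₀))
    rw [hzero]
    exact (LipschitzWith.const 0).weaken zero_le

end ParametricIntegral

section WeightedIntegral

variable {Ω : Type*} [MeasurableSpace Ω] {μ : Measure Ω} {w f : Ω → ℝ} {c d : ℝ}

theorem integrable_mul_iff_of_mem_Icc (hw : AEMeasurable w μ)
    (hwcd : ∀ᵐ ω ∂μ, w ω ∈ Icc c d) (hc : 0 < c) :
    Integrable (fun ω => w ω * f ω) μ ↔ Integrable f μ := by
  constructor
  · intro hwf
    refine (hwf.bdd_mul (c := c⁻¹) hw.inv.aestronglyMeasurable ?_).congr ?_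
    · filter_upwards [hwcd] with ω hω
      rw [Pi.inv_apply, norm_inv, Real.norm_of_nonneg (hc.le.trans hω.1)]
      exact inv_anti₀ hc hω.1
    · filter_upwards [hwcd] with ω hω
      simp only [Pi.inv_apply]
      field_simp [(hc.trans_le hω.1).ne']
  · intro hf
    refine hf.bdd_mul (c := d) hw.aestronglyMeasurable (hwcd.mono fun ω hω => ?_)
    rw [Real.norm_of_nonneg (hc.le.trans hω.1)]
    exact hω.2

theorem mul_integral_le_integral_mul (hw : AEMeasurable w μ)
    (hwcd : ∀ᵐ ω ∂μ, w ω ∈ Icc c d) (hc : 0 < c) (hf : 0 ≤ᵐ[μ] f) :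
    c * ∫ ω, f ω ∂μ ≤ ∫ ω, w ω * f ω ∂μ := by
  by_cases hfi : Integrable f μ
  · rw [← integral_const_mul]
    refine integral_mono_ae (hfi.const_mul c)
      ((integrable_mul_iff_of_mem_Icc hw hwcd hc).mpr hfi) ?_
    filter_upwards [hwcd, hf] with ω hω hfω
    exact mul_le_mul_of_nonneg_right hω.1 hfω
  · have hwfi := (integrable_mul_iff_of_mem_Icc hw hwcd hc).not.mpr hfi
    rw [integral_undef hfi, integral_undef hwfi, mul_zero]

theorem integral_mul_le_mul_integral (hw : AEMeasurable w μ)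
    (hwcd : ∀ᵐ ω ∂μ, w ω ∈ Icc c d) (hc : 0 < c) (hf : 0 ≤ᵐ[μ] f) :
    ∫ ω, w ω * f ω ∂μ ≤ d * ∫ ω, f ω ∂μ := by
  by_cases hfi : Integrable f μ
  · rw [← integral_const_mul]
    refine integral_mono_ae ((integrable_mul_iff_of_mem_Icc hw hwcd hc).mpr hfi)
      (hfi.const_mul d) ?_
    filter_upwards [hwcd, hf] with ω hω hfω
    exact mul_le_mul_of_nonneg_right hω.2 hfω
  · have hwfi := (integrable_mul_iff_of_mem_Icc hw hwcd hc).not.mpr hfi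
    rw [integral_undef hfi, integral_undef hwfi, mul_zero]

end WeightedIntegral

theorem div_add_le_one_add_inv {k g h δ : ℝ} (hk : 0 < k) (hg : 0 ≤ g) (hδ : 0 < δ)
    (hkgh : k * g ≤ h) : (g + δ) / (h + δ) ≤ 1 + k⁻¹ := by
  have hh : 0 ≤ h := (mul_nonneg hk.le hg).trans hkgh
  have hgh : g ≤ k⁻¹ * h := by rwa [le_inv_mul_iff₀ hk]
  rw [div_le_iff₀ (by positivity)]
  nlinarith [inv_pos.mpr hk]

theorem inv_one_add_le_div_add {l g h δ : ℝ} (hl : 0 ≤ l) (hg : 0 ≤ g) (hh : 0 ≤ h)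
    (hδ : 0 < δ) (hhlg : h ≤ l * g) : (1 + l)⁻¹ ≤ (g + δ) / (h + δ) := by
  rw [inv_eq_one_div, div_le_div_iff₀ (by positivity) (by positivity)]
  nlinarith

section Lipschitz

variable {α : Type*} [PseudoMetricSpace α]

theorem LipschitzWith.div_of_le {P Q : α → ℝ} {Kp Kq c δ : ℝ≥0} (hP : LipschitzWith Kp P)
    (hQ : LipschitzWith Kq Q) (hδ : 0 < δ) (hQδ : ∀ x, (δ : ℝ) ≤ Q x)
    (hc : ∀ x, |P x / Q x| ≤ c) : LipschitzWith ((Kp + c * Kq) / δ) fun x => P x / Q x := by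
  refine LipschitzWith.of_dist_le_mul fun x y => ?_
  have hQx : 0 < Q x := (NNReal.coe_pos.mpr hδ).trans_le (hQδ x)
  have hsplit : P x / Q x - P y / Q y = ((P x - P y) - P y / Q y * (Q x - Q y)) / Q x := by
    field_simp [hQx.ne', ((NNReal.coe_pos.mpr hδ).trans_le (hQδ y)).ne']
    ring
  have hnum : |(P x - P y) - P y / Q y * (Q x - Q y)| ≤ (Kp + c * Kq) * dist x y := by
    calc |(P x - P y) - P y / Q y * (Q x - Q y)|
        ≤ |P x - P y| + |P y / Q y| * |Q x - Q y| := by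
          rw [← abs_mul]; exact abs_sub _ _
      _ ≤ Kp * dist x y + c * (Kq * dist x y) := by
          gcongr
          · exact hP.dist_le_mul x y
          · exact hc y
          · exact hQ.dist_le_mul x y
      _ = (Kp + c * Kq) * dist x y := by ring
  rw [Real.dist_eq, hsplit, abs_div, abs_of_pos hQx]
  refine (div_le_div₀ (by positivity) hnum (NNReal.coe_pos.mpr hδ) (hQδ x)).trans_eq ?_
  push_cast
  ring

theorem LipschitzWith.sqrt_of_le {f : α → ℝ} {K m : ℝ≥0} (hf : LipschitzWith K f) (hm : 0 < m)
    (hfm : ∀ x, (m : ℝ) ≤ f x) : LipschitzWith ((2 * NNReal.sqrt m)⁻¹ * K) fun x => √(f x) := by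
  refine LipschitzWith.of_dist_le_mul fun x y => ?_
  have hf0 : ∀ x, 0 ≤ f x := fun x => m.2.trans (hfm x)
  have hsum : 2 * √m ≤ √(f x) + √(f y) := by
    linarith [Real.sqrt_le_sqrt (hfm x), Real.sqrt_le_sqrt (hfm y)]
  have hprod : (√(f x) - √(f y)) * (√(f x) + √(f y)) = f x - f y := by
    rw [mul_comm, ← sq_sub_sq, Real.sq_sqrt (hf0 x), Real.sq_sqrt (hf0 y)]
  push_cast
  rw [Real.dist_eq, mul_assoc, inv_mul_eq_div, le_div_iff₀ (by positivity)]
  calc |√(f x) - √(f y)| * (2 * √m)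
      ≤ |√(f x) - √(f y)| * (√(f x) + √(f y)) := by gcongr
    _ = |f x - f y| := by
        rw [← hprod, abs_mul, abs_of_nonneg (add_nonneg (Real.sqrt_nonneg _) (Real.sqrt_nonneg _))]
    _ ≤ K * dist x y := hf.dist_le_mul x y

noncomputable def sqrtRatioLipschitzConst (k l : ℝ≥0) : ℝ≥0 :=
  NNReal.sqrt (1 + l) / 2 * (1 + (1 + k⁻¹) * l)

theorem LipschitzWith.sqrt_div_add_of_le {G H : α → ℝ} {L k l δ : ℝ≥0} (hG : LipschitzWith L G)
    (hH : LipschitzWith (l * L) H) (hk : 0 < k) (hδ : 0 < δ) (hG0 : ∀ x, 0 ≤ G x)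
    (hkGH : ∀ x, k * G x ≤ H x) (hHlG : ∀ x, H x ≤ l * G x) :
    LipschitzWith (sqrtRatioLipschitzConst k l * L / δ) fun x => √((G x + δ) / (H x + δ)) := by
  have hH0 : ∀ x, 0 ≤ H x := fun x => (mul_nonneg k.2 (hG0 x)).trans (hkGH x)
  have hP : LipschitzWith L fun x => G x + δ := by
    simpa using hG.add (LipschitzWith.const (δ : ℝ))
  have hQ : LipschitzWith (l * L) fun x => H x + δ := by
    simpa using hH.add (LipschitzWith.const (δ : ℝ))
  have hratio := hP.div_of_le hQ (c := 1 + k⁻¹) hδ (fun x => le_add_of_nonneg_left (hH0 x))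
    fun x => by
      rw [abs_of_nonneg (div_nonneg (by linarith [hG0 x]) (by linarith [hH0 x]))]
      simpa using div_add_le_one_add_inv (by positivity) (hG0 x) (by positivity) (hkGH x)
  have hsqrt := hratio.sqrt_of_le (m := (1 + l)⁻¹) (by positivity) fun x => by
    simpa using inv_one_add_le_div_add l.2 (hG0 x) (hH0 x) (by positivity) (hHlG x)
  refine hsqrt.weaken (le_of_eq ?_)
  simp only [sqrtRatioLipschitzConst, NNReal.sqrt_inv, div_eq_mul_inv, mul_inv, inv_inv]
  ring

end Lipschitz

theorem nadaraya_watson_inv_sqrt_lipschitz_general (a b : ℝ) (ha : 0 < a) :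
    ∃ C' : ℝ, 0 < C' ∧
      ∀ (Ω : Type) (_ : MeasurableSpace Ω) (μ : Measure Ω), IsProbabilityMeasure μ →
        ∀ (ξ X : Ω → ℝ), Measurable ξ → Measurable X →
          (∀ᵐ ω ∂μ, a ^ 2 ≤ (ξ ω) ^ 2 ∧ (ξ ω) ^ 2 ≤ b ^ 2) →
          ∀ (K : ℝ → ℝ), ContDiff ℝ 1 K → (∀ x, 0 ≤ K x) →
            ∀ M : ℝ, (∀ x, |deriv K x| ≤ M) →
              ∀ δ : ℝ, 0 < δ →
                LipschitzWith (Real.toNNReal (C' * M / δ))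
                  (fun y => Real.sqrt ((∫ ω, K (y - X ω) ∂μ + δ) /
                    (∫ ω, (ξ ω) ^ 2 * K (y - X ω) ∂μ + δ))) := by
  lift a to ℝ≥0 using ha.le
  refine ⟨sqrtRatioLipschitzConst (a ^ 2) (‖b‖₊ ^ 2), by unfold sqrtRatioLipschitzConst; positivity,
    ?_⟩
  intro Ω _ μ _ ξ X hξ hX hbound K hK hKpos M hM δ hδ
  lift M to ℝ≥0 using (abs_nonneg _).trans (hM 0)
  lift δ to ℝ≥0 using hδ.le
  have hKshift : ∀ x₀, LipschitzWith M fun y => K (y - x₀) := fun x₀ => by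
    have hKlip : LipschitzWith M K := lipschitzWith_of_nnnorm_deriv_le
      (hK.differentiable one_ne_zero) fun x => by simpa [← NNReal.coe_le_coe] using hM x
    simpa [Function.comp_def] using hKlip.comp (IsometryEquiv.subRight x₀).isometry.lipschitz
  have hKmeas : ∀ y, Measurable fun ω => K (y - X ω) :=
    fun y => hK.continuous.measurable.comp (measurable_const.sub hX)
  have hG := lipschitzWith_integral (μ := μ)
    (fun y => (hKmeas y).aestronglyMeasurable) (ae_of_all _ fun ω => hKshift (X ω))
  have hH : LipschitzWith (‖b‖₊ ^ 2 * M) fun y => ∫ ω, ξ ω ^ 2 * K (y - X ω) ∂μ :=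
    lipschitzWith_integral (fun y => ((hξ.pow_const 2).mul (hKmeas y)).aestronglyMeasurable)
      (hbound.mono fun ω hω => ((lipschitzWith_smul (ξ ω ^ 2)).comp (hKshift (X ω))).weaken
        (by rw [nnnorm_pow]; gcongr; exact sq_le_sq.mp hω.2))
  have hξ2 := (hξ.pow_const 2).aemeasurable (μ := μ)
  have hKpos_ae : ∀ y, 0 ≤ᵐ[μ] fun ω => K (y - X ω) := fun y => ae_of_all _ fun ω => hKpos _
  have hGH : ∀ y, ((a ^ 2 : ℝ≥0) : ℝ) * ∫ ω, K (y - X ω) ∂μ ≤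
      ∫ ω, ξ ω ^ 2 * K (y - X ω) ∂μ :=
    fun y => by simpa using mul_integral_le_integral_mul hξ2 hbound (by positivity) (hKpos_ae y)
  have hHG : ∀ y, ∫ ω, ξ ω ^ 2 * K (y - X ω) ∂μ ≤
      ((‖b‖₊ ^ 2 : ℝ≥0) : ℝ) * ∫ ω, K (y - X ω) ∂μ :=
    fun y => by simpa using integral_mul_le_mul_integral hξ2 hbound (by positivity) (hKpos_ae y)
  rw [← NNReal.coe_mul, ← NNReal.coe_div, Real.toNNReal_coe]
  exact hG.sqrt_div_add_of_le hH (pow_pos (NNReal.coe_pos.mp ha) 2) (NNReal.coe_pos.mp hδ)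
    (fun y => integral_nonneg fun ω => hKpos _) hGH hHG

theorem nadaraya_watson_inv_sqrt_lipschitz (a b : ℝ) (ha : 0 < a) (hab : a ≤ b) :
    ∃ C' : ℝ, 0 < C' ∧
      ∀ (Ω : Type) (_ : MeasurableSpace Ω) (μ : Measure Ω), IsProbabilityMeasure μ →
        ∀ (ξ X : Ω → ℝ), Measurable ξ → Measurable X →
          (∀ᵐ ω ∂μ, a ^ 2 ≤ (ξ ω) ^ 2 ∧ (ξ ω) ^ 2 ≤ b ^ 2) →
          ∀ (K : ℝ → ℝ), ContDiff ℝ 1 K → (∀ x, 0 ≤ K x) →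
            ∀ M : ℝ, (∀ x, |deriv K x| ≤ M) →
              ∀ δ : ℝ, 0 < δ →
                LipschitzWith (Real.toNNReal (C' * M / δ))
                  (fun y => Real.sqrt ((∫ ω, K (y - X ω) ∂μ + δ) /
                    (∫ ω, (ξ ω) ^ 2 * K (y - X ω) ∂μ + δ))) :=
  nadaraya_watson_inv_sqrt_lipschitz_general a b ha
end
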